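/- arXiv:math-ph/0202029 — 2 statements merged into one kernel-verified Lean document; each statement's English description precedes it below -/
import Mathlib

section
/- Let T be a symmetric bilinear form on an n-dimensional Lorentzian vector space. T has the dominant property (T(u,v) ≥ 0 for all future-pointing causal u,v) if and only if in every orthonormal basis (e₀,e₁,…,e_{n-1}) with e₀ future-pointing timelike, one has T(e₀,e₀) ≥ |T(e_α,e_β)| for all indices α,β. -/
open scoped BigOperators

noncomputable section

/-- Minkowski metric on `Fin n → ℝ`, mostly-plus signature (1, n-1). -/
def mink (n : ℕ) [NeZero n] (u v : Fin n → ℝ) : ℝ :=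
  ∑ i : Fin n, (if i = 0 then (-1 : ℝ) else 1) * u i * v i

/-- Future-pointing causal vector: nonpositive norm, in the closed future half-cone. -/
def FutureCausal (n : ℕ) [NeZero n] (u : Fin n → ℝ) : Prop :=
  mink n u u ≤ 0 ∧ 0 ≤ u 0

/-- Future-pointing timelike vector. -/
def FutureTimelike (n : ℕ) [NeZero n] (u : Fin n → ℝ) : Prop :=
  mink n u u < 0 ∧ 0 < u 0

/-- A family `e : Fin n → (Fin n → ℝ)` is an orthonormal basis for the Minkowski
metric: `g(e_α, e_β) = diag(-1, 1, …, 1)`. -/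
def IsLorentzOrthonormal (n : ℕ) [NeZero n] (e : Fin n → (Fin n → ℝ)) : Prop :=
  ∀ α β : Fin n, mink n (e α) (e β) =
    if α = β then (if α = 0 then (-1 : ℝ) else 1) else 0

/-!
For an orthonormal frame with `e₀` future timelike, the vectors `e₀ ± e_γ` are future causal
(null when `γ ≠ 0`), and the four inequalities `T(e₀ ± e_α, e₀ ± e_β) ≥ 0` add up to
`|T(e_α, e_β)| ≤ T(e₀, e₀)`.

Conversely, by continuity it suffices to show `T(w, v) ≥ 0` for `w` on the unit future
hyperboloid. Reflections complete `w` and any unit vector `x ⊥ w` to an orthonormal frame, so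
`|T(w, x)| ≤ T(w, w)`. Writing `v = a w + y` with `y ⊥ w`, the vector `y` is spacelike with
`⟨y, y⟩ ≤ a²`, whence `T(w, v) ≥ (a - √⟨y, y⟩) T(w, w) ≥ 0`.
-/

section

variable {n : ℕ} [NeZero n]

lemma mink_comm (u v : Fin n → ℝ) : mink n u v = mink n v u :=
  Finset.sum_congr rfl fun _ _ => by ring

lemma mink_add_left (u u' v : Fin n → ℝ) :
    mink n (u + u') v = mink n u v + mink n u' v := by
  simp only [mink, Pi.add_apply, ← Finset.sum_add_distrib]
  exact Finset.sum_congr rfl fun _ _ => by ring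

lemma mink_sub_left (u u' v : Fin n → ℝ) :
    mink n (u - u') v = mink n u v - mink n u' v := by
  simp only [mink, Pi.sub_apply, ← Finset.sum_sub_distrib]
  exact Finset.sum_congr rfl fun _ _ => by ring

lemma mink_smul_left (c : ℝ) (u v : Fin n → ℝ) : mink n (c • u) v = c * mink n u v := by
  simp only [mink, Pi.smul_apply, smul_eq_mul, Finset.mul_sum]
  exact Finset.sum_congr rfl fun _ _ => by ring

lemma mink_add_right (u v v' : Fin n → ℝ) :
    mink n u (v + v') = mink n u v + mink n u v' := by
  rw [mink_comm, mink_add_left, mink_comm v, mink_comm v']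

lemma mink_sub_right (u v v' : Fin n → ℝ) :
    mink n u (v - v') = mink n u v - mink n u v' := by
  rw [mink_comm, mink_sub_left, mink_comm v, mink_comm v']

lemma mink_smul_right (c : ℝ) (u v : Fin n → ℝ) : mink n u (c • v) = c * mink n u v := by
  rw [mink_comm, mink_smul_left, mink_comm]

lemma mink_neg_left (u v : Fin n → ℝ) : mink n (-u) v = -mink n u v := by
  rw [← neg_one_smul ℝ u, mink_smul_left, neg_one_mul]

lemma mink_single_right (u : Fin n → ℝ) (i : Fin n) :
    mink n u (Pi.single i 1) = (if i = 0 then -1 else 1) * u i := by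
  rw [mink, Finset.sum_eq_single i (fun j _ hj => by simp [hj]) (by simp)]
  simp

lemma isLorentzOrthonormal_single :
    IsLorentzOrthonormal n (fun i => Pi.single i 1) := by
  intro α β
  rw [mink_single_right]
  by_cases h : α = β <;> simp [h, eq_comm]

def spatialInner (u v : Fin n → ℝ) : ℝ := ∑ i ∈ Finset.univ.erase 0, u i * v i

lemma mink_eq_spatialInner (u v : Fin n → ℝ) :
    mink n u v = -(u 0 * v 0) + spatialInner u v := by
  rw [mink, ← Finset.add_sum_erase _ _ (Finset.mem_univ 0), spatialInner]
  congr 1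
  · simp
  · exact Finset.sum_congr rfl fun i hi => by rw [if_neg (Finset.ne_of_mem_erase hi), one_mul]

lemma spatialInner_self_nonneg (u : Fin n → ℝ) : 0 ≤ spatialInner u u :=
  Finset.sum_nonneg fun i _ => mul_self_nonneg (u i)

lemma spatialInner_sq_le (u v : Fin n → ℝ) :
    spatialInner u v ^ 2 ≤ spatialInner u u * spatialInner v v := by
  simpa only [spatialInner, sq] using Finset.sum_mul_sq_le_sq_mul_sq (Finset.univ.erase 0) u v

lemma FutureCausal.mink_nonpos {u v : Fin n → ℝ} (hu : FutureCausal n u)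
    (hv : FutureCausal n v) : mink n u v ≤ 0 := by
  rw [FutureCausal, mink_eq_spatialInner] at hu hv
  have hsq : spatialInner u v ^ 2 ≤ (u 0 * v 0) ^ 2 := by
    nlinarith [spatialInner_sq_le u v, spatialInner_self_nonneg u, spatialInner_self_nonneg v]
  rw [mink_eq_spatialInner]
  linarith [(abs_le_of_sq_le_sq' hsq (mul_nonneg hu.2 hv.2)).2]

lemma eq_zero_of_orthogonal_timelike {w y : Fin n → ℝ} (hw : mink n w w < 0)
    (hwy : mink n w y = 0) (hy : mink n y y ≤ 0) : y = 0 := by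
  rw [mink_eq_spatialInner] at hw hwy hy
  have hy0 : y 0 = 0 := by
    have hsq : (w 0 * y 0) ^ 2 ≤ spatialInner w w * y 0 ^ 2 := by
      rw [show w 0 * y 0 = spatialInner w y by linarith]
      nlinarith [spatialInner_sq_le w y, spatialInner_self_nonneg w]
    have hprod : y 0 ^ 2 * (w 0 * w 0 - spatialInner w w) ≤ 0 := by nlinarith
    have hsq0 : y 0 ^ 2 ≤ 0 := nonpos_of_mul_nonpos_left hprod (by linarith)
    exact pow_eq_zero_iff two_ne_zero |>.1 (le_antisymm hsq0 (sq_nonneg _))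
  have hspatial : spatialInner y y = 0 :=
    le_antisymm (by nlinarith) (spatialInner_self_nonneg y)
  funext i
  by_cases hi : i = 0
  · rw [hi, hy0, Pi.zero_apply]
  · exact (Finset.sum_mul_self_eq_zero_iff _ _).1 hspatial i (by simp [hi])

lemma FutureCausal.smul {u : Fin n → ℝ} (hu : FutureCausal n u) {c : ℝ} (hc : 0 ≤ c) :
    FutureCausal n (c • u) := by
  refine ⟨?_, ?_⟩
  · rw [mink_smul_left, mink_smul_right]
    nlinarith [hu.1, mul_self_nonneg c]
  · simpa using mul_nonneg hc hu.2

lemma FutureTimelike.futureCausal {u : Fin n → ℝ} (hu : FutureTimelike n u) :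
    FutureCausal n u :=
  ⟨hu.1.le, hu.2.le⟩

lemma FutureCausal.of_mink_neg {w ℓ : Fin n → ℝ} (hw : FutureCausal n w)
    (hℓ : mink n ℓ ℓ ≤ 0) (hwℓ : mink n w ℓ < 0) : FutureCausal n ℓ := by
  refine ⟨hℓ, not_lt.1 fun hneg => ?_⟩
  have hpast : FutureCausal n (-ℓ) :=
    ⟨by rwa [mink_neg_left, mink_comm, mink_neg_left, neg_neg], by simpa using hneg.le⟩
  have := hw.mink_nonpos hpast
  rw [mink_comm, mink_neg_left, mink_comm] at this
  linarith

def minkReflection (h u : Fin n → ℝ) : Fin n → ℝ :=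
  u - (2 * mink n u h / mink n h h) • h

lemma mink_minkReflection {h : Fin n → ℝ} (hh : mink n h h ≠ 0) (u v : Fin n → ℝ) :
    mink n (minkReflection h u) (minkReflection h v) = mink n u v := by
  simp only [minkReflection, mink_sub_left, mink_sub_right, mink_smul_left, mink_smul_right,
    mink_comm h v]
  field_simp
  ring

lemma minkReflection_of_mink_eq_zero {h u : Fin n → ℝ} (hu : mink n u h = 0) :
    minkReflection h u = u := by
  simp [minkReflection, hu]

lemma minkReflection_sub {a b : Fin n → ℝ} (hab : mink n a a = mink n b b)
    (hne : mink n (a - b) (a - b) ≠ 0) : minkReflection (a - b) a = b := by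
  have hcoef : 2 * mink n a (a - b) = mink n (a - b) (a - b) := by
    simp only [mink_sub_left, mink_sub_right, mink_comm b a, ← hab]
    ring
  rw [minkReflection, hcoef, div_self hne, one_smul, sub_sub_cancel]

lemma minkReflection_neg_self {b : Fin n → ℝ} (hb : mink n b b ≠ 0) :
    minkReflection b (-b) = b := by
  rw [minkReflection, mink_neg_left, mul_neg, neg_div, mul_div_assoc, div_self hb]
  module

/-- Witt's theorem: one reflection, or two when `a - b` is null. -/
lemma exists_mink_isometry_map {a b : Fin n → ℝ} (hab : mink n a a = mink n b b)
    (hb : mink n b b ≠ 0) :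
    ∃ f : (Fin n → ℝ) → (Fin n → ℝ), (∀ u v, mink n (f u) (f v) = mink n u v) ∧ f a = b ∧
      ∀ c, mink n c a = 0 → mink n c b = 0 → f c = c := by
  have hsub : mink n (a - b) (a - b) = 2 * mink n b b - 2 * mink n a b := by
    simp only [mink_sub_left, mink_sub_right, mink_comm b a, hab]
    ring
  rcases ne_or_eq (mink n (a - b) (a - b)) 0 with hne | hne
  · refine ⟨minkReflection (a - b), mink_minkReflection hne, minkReflection_sub hab hne,
      fun c hca hcb => minkReflection_of_mink_eq_zero ?_⟩
    rw [mink_sub_right, hca, hcb, sub_zero]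
  · have hadd : mink n (a - -b) (a - -b) ≠ 0 := by
      rw [sub_neg_eq_add]
      simp only [mink_add_left, mink_add_right, mink_comm b a, hab]
      intro h
      apply hb
      linarith
    refine ⟨minkReflection b ∘ minkReflection (a - -b), fun u v => ?_, ?_, fun c hca hcb => ?_⟩
    · rw [Function.comp_apply, Function.comp_apply, mink_minkReflection hb,
        mink_minkReflection hadd]
    · rw [Function.comp_apply, minkReflection_sub (by rw [hab, mink_neg_left, mink_comm b (-b),
        mink_neg_left, neg_neg]) hadd, minkReflection_neg_self hb]
    · have hc : minkReflection (a - -b) c = c := minkReflection_of_mink_eq_zero (by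
        rw [sub_neg_eq_add, mink_add_right, hca, hcb, add_zero])
      rw [Function.comp_apply, hc, minkReflection_of_mink_eq_zero hcb]

lemma IsLorentzOrthonormal.comp {e : Fin n → Fin n → ℝ} (he : IsLorentzOrthonormal n e)
    {f : (Fin n → ℝ) → (Fin n → ℝ)} (hf : ∀ u v, mink n (f u) (f v) = mink n u v) :
    IsLorentzOrthonormal n (f ∘ e) :=
  fun α β => (hf (e α) (e β)).trans (he α β)

lemma exists_isLorentzOrthonormal_zero_eq {w : Fin n → ℝ} (hw : mink n w w = -1) :
    ∃ e, IsLorentzOrthonormal n e ∧ e 0 = w := by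
  have hsingle : mink n (Pi.single 0 1) (Pi.single 0 1) = -1 := by
    simp [mink_single_right]
  obtain ⟨f, hf, hfw, -⟩ := exists_mink_isometry_map (hsingle.trans hw.symm) (by rw [hw]; norm_num)
  exact ⟨f ∘ fun i => Pi.single i 1, isLorentzOrthonormal_single.comp hf, hfw⟩

lemma exists_isLorentzOrthonormal_zero_eq_and_eq {w x : Fin n → ℝ} (hw : mink n w w = -1)
    (hx : mink n x x = 1) (hwx : mink n w x = 0) :
    ∃ e i, IsLorentzOrthonormal n e ∧ e 0 = w ∧ e i = x := by
  obtain ⟨i, hi⟩ : ∃ i : Fin n, i ≠ 0 := by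
    by_contra! h
    have hspatial : spatialInner x x = 0 :=
      Finset.sum_eq_zero fun i hi => absurd (h i) (Finset.ne_of_mem_erase hi)
    rw [mink_eq_spatialInner, hspatial] at hx
    nlinarith
  obtain ⟨e, he, he0⟩ := exists_isLorentzOrthonormal_zero_eq hw
  have hei : mink n (e i) (e i) = 1 := by simp [he i i, hi]
  obtain ⟨f, hf, hfx, hfix⟩ := exists_mink_isometry_map (hei.trans hx.symm) (by rw [hx]; norm_num)
  refine ⟨f ∘ e, i, he.comp hf, ?_, hfx⟩
  rw [Function.comp_apply, he0]
  exact hfix w (by rw [← he0, he 0 i, if_neg hi.symm]) hwx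

lemma IsLorentzOrthonormal.futureCausal_add_smul {e : Fin n → Fin n → ℝ}
    (he : IsLorentzOrthonormal n e) (he0 : FutureTimelike n (e 0)) (γ : Fin n) {s : ℝ}
    (hs : s = 1 ∨ s = -1) : FutureCausal n (e 0 + s • e γ) := by
  rcases eq_or_ne γ 0 with rfl | hγ
  · rw [show e 0 + s • e 0 = (1 + s) • e 0 by module]
    exact he0.futureCausal.smul (by rcases hs with rfl | rfl <;> norm_num)
  · have h00 : mink n (e 0) (e 0) = -1 := by simp [he 0 0]
    have h0γ : mink n (e 0) (e γ) = 0 := by simp [he 0 γ, hγ.symm]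
    have hγγ : mink n (e γ) (e γ) = 1 := by simp [he γ γ, hγ]
    apply he0.futureCausal.of_mink_neg
    · simp only [mink_add_left, mink_add_right, mink_smul_left, mink_smul_right, mink_comm (e γ),
        h00, h0γ, hγγ]
      rcases hs with rfl | rfl <;> norm_num
    · rw [mink_add_right, mink_smul_right, h00, h0γ]
      norm_num

lemma abs_apply_le_of_dominant (T : (Fin n → ℝ) →ₗ[ℝ] (Fin n → ℝ) →ₗ[ℝ] ℝ)
    (hT : ∀ u v, FutureCausal n u → FutureCausal n v → 0 ≤ T u v)
    {e : Fin n → Fin n → ℝ} (he : IsLorentzOrthonormal n e) (he0 : FutureTimelike n (e 0))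
    (α β : Fin n) : |T (e α) (e β)| ≤ T (e 0) (e 0) := by
  have hexpand : ∀ s t : ℝ, (s = 1 ∨ s = -1) → (t = 1 ∨ t = -1) →
      0 ≤ T (e 0) (e 0) + t * T (e 0) (e β) + s * T (e α) (e 0) + s * t * T (e α) (e β) := by
    intro s t hs ht
    have := hT _ _ (he.futureCausal_add_smul he0 α hs) (he.futureCausal_add_smul he0 β ht)
    simp only [map_add, map_smul, LinearMap.add_apply, LinearMap.smul_apply, smul_eq_mul] at this
    linarith
  have hpp := hexpand 1 1 (by norm_num) (by norm_num)
  have hmm := hexpand (-1) (-1) (by norm_num) (by norm_num)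
  have hpm := hexpand 1 (-1) (by norm_num) (by norm_num)
  have hmp := hexpand (-1) 1 (by norm_num) (by norm_num)
  rw [abs_le]
  constructor <;> linarith

lemma FutureCausal.nonneg_of_abs_le {w : Fin n → ℝ} (hw : mink n w w = -1) (hw0 : 0 < w 0)
    (f : (Fin n → ℝ) →ₗ[ℝ] ℝ) (hfw : 0 ≤ f w)
    (hf : ∀ x, mink n x x = 1 → mink n w x = 0 → |f x| ≤ f w)
    {v : Fin n → ℝ} (hv : FutureCausal n v) : 0 ≤ f v := by
  set a := -mink n w v
  have ha : 0 ≤ a := neg_nonneg.2 (FutureCausal.mink_nonpos ⟨by rw [hw]; norm_num, hw0.le⟩ hv)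
  set y := v - a • w
  have hwy : mink n w y = 0 := by
    simp only [y, mink_sub_right, mink_smul_right, hw, a]
    ring
  have hyy : mink n y y = mink n v v + a ^ 2 := by
    simp only [y, mink_sub_left, mink_sub_right, mink_smul_left, mink_smul_right, hw,
      mink_comm v w, a]
    ring
  have hfv : f v = a * f w + f y := by
    rw [show v = a • w + y by simp [y], map_add, map_smul, smul_eq_mul]
  rcases le_or_gt (mink n y y) 0 with hy | hy
  · rw [hfv, eq_zero_of_orthogonal_timelike (by rw [hw]; norm_num) hwy hy, map_zero, add_zero]
    exact mul_nonneg ha hfw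
  · set r := Real.sqrt (mink n y y)
    have hr : 0 < r := Real.sqrt_pos.2 hy
    have hra : r ≤ a := Real.sqrt_le_iff.2 ⟨ha, by linarith [hv.1]⟩
    have hfy : f y = r * f (r⁻¹ • y) := by
      rw [map_smul, smul_eq_mul, ← mul_assoc, mul_inv_cancel₀ hr.ne', one_mul]
    have hfx := hf (r⁻¹ • y)
      (by rw [mink_smul_left, mink_smul_right, ← mul_assoc, ← mul_inv, ← sq,
        Real.sq_sqrt hy.le, inv_mul_cancel₀ hy.ne'])
      (by rw [mink_smul_right, hwy, mul_zero])
    rw [hfv, hfy]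
    nlinarith [(abs_le.1 hfx).1]

lemma FutureTimelike.nonneg_of_unit (f : (Fin n → ℝ) →ₗ[ℝ] ℝ)
    (hf : ∀ w, mink n w w = -1 → 0 < w 0 → 0 ≤ f w) {u : Fin n → ℝ}
    (hu : FutureTimelike n u) : 0 ≤ f u := by
  set s := Real.sqrt (-mink n u u)
  have hs : 0 < s := Real.sqrt_pos.2 (neg_pos.2 hu.1)
  have hss : mink n u u = -(s * s) := by
    rw [Real.mul_self_sqrt (neg_nonneg.2 hu.1.le), neg_neg]
  have hw := hf (s⁻¹ • u)
    (by rw [mink_smul_left, mink_smul_right, hss]; field_simp)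
    (by simpa using mul_pos (inv_pos.2 hs) hu.2)
  rw [map_smul, smul_eq_mul] at hw
  exact (mul_nonneg_iff_of_pos_left (inv_pos.2 hs)).1 hw

lemma FutureCausal.add_smul_single {u : Fin n → ℝ} (hu : FutureCausal n u) {ε : ℝ}
    (hε : 0 < ε) : FutureTimelike n (u + ε • Pi.single 0 1) := by
  refine ⟨?_, by simpa using add_pos_of_nonneg_of_pos hu.2 hε⟩
  have hu0 : mink n u (Pi.single 0 1) = -u 0 := by simp [mink_single_right]
  have h00 : mink n (Pi.single 0 1) (Pi.single 0 1) = (-1 : ℝ) := by simp [mink_single_right]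
  simp only [mink_add_left, mink_add_right, mink_smul_left, mink_smul_right,
    mink_comm (Pi.single 0 1) u, hu0, h00]
  nlinarith [hu.1, hu.2]

lemma nonneg_of_forall_pos_add_mul {a c : ℝ} (h : ∀ ε > 0, 0 ≤ a + ε * c) : 0 ≤ a := by
  have hcont : Continuous fun ε : ℝ => a + ε * c := by fun_prop
  have hlim : Filter.Tendsto (fun ε : ℝ => a + ε * c) (nhdsWithin 0 (Set.Ioi 0)) (nhds a) :=
    (hcont.tendsto' 0 a (by simp)).mono_left nhdsWithin_le_nhds
  exact ge_of_tendsto hlim (eventually_nhdsWithin_of_forall h)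

lemma FutureCausal.nonneg_of_unit (f : (Fin n → ℝ) →ₗ[ℝ] ℝ)
    (hf : ∀ w, mink n w w = -1 → 0 < w 0 → 0 ≤ f w) {u : Fin n → ℝ}
    (hu : FutureCausal n u) : 0 ≤ f u := by
  refine nonneg_of_forall_pos_add_mul (c := f (Pi.single 0 1)) fun ε hε => ?_
  have := (hu.add_smul_single hε).nonneg_of_unit f hf
  rwa [map_add, map_smul, smul_eq_mul] at this

lemma dominant_of_abs_apply_le (T : (Fin n → ℝ) →ₗ[ℝ] (Fin n → ℝ) →ₗ[ℝ] ℝ)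
    (hT : ∀ e, IsLorentzOrthonormal n e → FutureTimelike n (e 0) →
      ∀ α β, |T (e α) (e β)| ≤ T (e 0) (e 0))
    {u v : Fin n → ℝ} (hu : FutureCausal n u) (hv : FutureCausal n v) : 0 ≤ T u v := by
  refine hu.nonneg_of_unit (T.flip v) fun w hw hw0 => ?_
  have hframe : ∀ e, IsLorentzOrthonormal n e → e 0 = w → ∀ i, |T w (e i)| ≤ T w w := by
    rintro e he rfl i
    exact hT e he ⟨by rw [hw]; norm_num, hw0⟩ 0 i
  obtain ⟨e, he, he0⟩ := exists_isLorentzOrthonormal_zero_eq hw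
  have hww : 0 ≤ T w w := (abs_nonneg _).trans (he0 ▸ hframe e he he0 0)
  refine hv.nonneg_of_abs_le hw hw0 (T w) hww fun x hx hwx => ?_
  obtain ⟨e, i, he, he0, hei⟩ := exists_isLorentzOrthonormal_zero_eq_and_eq hw hx hwx
  exact hei ▸ hframe e he he0 i

end

theorem stmt_4_general (n : ℕ) [NeZero n]
    (T : (Fin n → ℝ) →ₗ[ℝ] (Fin n → ℝ) →ₗ[ℝ] ℝ) :
    (∀ u v : Fin n → ℝ, FutureCausal n u → FutureCausal n v → 0 ≤ T u v) ↔
      (∀ e : Fin n → (Fin n → ℝ), IsLorentzOrthonormal n e →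
        FutureTimelike n (e 0) → ∀ α β : Fin n, |T (e α) (e β)| ≤ T (e 0) (e 0)) :=
  ⟨fun hT _ he he0 => abs_apply_le_of_dominant T hT he he0,
    fun hT _ _ => dominant_of_abs_apply_le T hT⟩

/-- A symmetric bilinear form has the dominant property iff in every orthonormal
basis with future-pointing timelike `e₀` one has `T(e₀,e₀) ≥ |T(e_α,e_β)|`. -/
theorem stmt_4 (n : ℕ) [NeZero n]
    (T : (Fin n → ℝ) →ₗ[ℝ] (Fin n → ℝ) →ₗ[ℝ] ℝ)
    (hsym : ∀ x y, T x y = T y x) :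
    (∀ u v : Fin n → ℝ, FutureCausal n u → FutureCausal n v → 0 ≤ T u v) ↔
      (∀ e : Fin n → (Fin n → ℝ), IsLorentzOrthonormal n e →
        FutureTimelike n (e 0) → ∀ α β : Fin n, |T (e α) (e β)| ≤ T (e 0) (e 0)) :=
  stmt_4_general n T
end
end

section
/- Let T be a continuous rank-r tensor with the dominant property on an n-dimensional Lorentzian vector space, and suppose T(k,…,k) = 0 for some future-pointing causal vector k with T not identically zero. Then k must be null (g(k,k) = 0). -/
open scoped BigOperators

noncomputable section

/-- The dominant property for rank-`r` covariant tensors. -/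
def DP (n r : ℕ) [NeZero n] (T : MultilinearMap ℝ (fun _ : Fin r => (Fin n → ℝ)) ℝ) : Prop :=
  ∀ u : Fin r → (Fin n → ℝ), (∀ i, FutureCausal n (u i)) → 0 ≤ T u

/-!
If `k` is timelike, it lies in the interior of the future causal cone `C`. Moving one slot
from `k` to `k + t • v` changes `T` linearly in `t`, so a vanishing value at `k` that is a minimum
on `C` forces the slope `T(…, v, …)` to vanish; replacing the slots one at a time shows that `T`
vanishes on all of `C^r`. Since `C` has nonempty interior it spans the space, hence `T = 0`.
-/

open Filter Topology

lemma eq_zero_of_eventually_nonneg_mul {x : ℝ} (h : ∀ᶠ t in 𝓝 (0 : ℝ), 0 ≤ t * x) : x = 0 := by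
  obtain ⟨ε, hε, hball⟩ := Metric.eventually_nhds_iff.1 h
  have hpos := hball (y := ε / 2) (by rw [Real.dist_0_eq_abs, abs_of_pos (by positivity)]; linarith)
  have hneg := hball (y := -(ε / 2))
    (by rw [Real.dist_0_eq_abs, abs_neg, abs_of_pos (by positivity)]; linarith)
  nlinarith

namespace MultilinearMap

variable {ι E : Type*} [Fintype ι] [AddCommGroup E] [Module ℝ E] [TopologicalSpace E]
  [ContinuousAdd E] [ContinuousSMul ℝ E]

theorem apply_eq_zero_of_nonneg_of_mem_interior (T : MultilinearMap ℝ (fun _ : ι => E) ℝ)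
    {C : Set E} (hpos : ∀ u : ι → E, (∀ i, u i ∈ C) → 0 ≤ T u) {k : E} (hk : k ∈ interior C)
    (h0 : T (fun _ => k) = 0) {u : ι → E} (hu : ∀ i, u i ∈ C) : T u = 0 := by
  classical
  suffices ∀ s : Finset ι, ∀ u : ι → E, (∀ i, u i ∈ C) → (∀ i ∉ s, u i = k) → T u = 0 from
    this Finset.univ u hu (by simp)
  intro s
  induction s using Finset.induction_on with
  | empty =>
    intro u _ hk_out
    simpa [show u = fun _ => k from funext fun i => hk_out i (Finset.notMem_empty i)] using h0
  | insert a s _ ih =>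
    intro u hu hk_out
    have hbase : T (Function.update u a k) = 0 := by
      refine ih _ (fun i => ?_) (fun i hi => ?_) <;> rcases eq_or_ne i a with rfl | hia
      · simpa using interior_subset hk
      · simpa [hia] using hu i
      · simp
      · simpa [hia] using hk_out i (by simp [hia, hi])
    have hline : ∀ᶠ t in 𝓝 (0 : ℝ), k + t • u a ∈ C := by
      have hcont : Continuous fun t : ℝ => k + t • u a := by fun_prop
      have hlim : Tendsto (fun t : ℝ => k + t • u a) (𝓝 0) (𝓝 k) := by
        simpa using hcont.tendsto 0
      exact hlim (mem_interior_iff_mem_nhds.1 hk)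
    refine eq_zero_of_eventually_nonneg_mul (hline.mono fun t ht => ?_)
    have hslope : T (Function.update u a (k + t • u a)) = t * T u := by
      rw [T.map_update_add, hbase, T.map_update_smul, Function.update_eq_self, zero_add,
        smul_eq_mul]
    rw [← hslope]
    refine hpos _ fun i => ?_
    rcases eq_or_ne i a with rfl | hia
    · simpa using ht
    · simpa [hia] using hu i

theorem eq_zero_of_forall_mem_of_span_eq_top {K V N : Type*} [Field K] [AddCommGroup V]
    [Module K V] [AddCommGroup N] [Module K N] (T : MultilinearMap K (fun _ : ι => V) N)
    {C : Set V} (hC : ⊤ ≤ Submodule.span K C) (hT : ∀ u : ι → V, (∀ i, u i ∈ C) → T u = 0) :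
    T = 0 :=
  Module.Basis.ext_multilinear (fun _ => Module.Basis.ofSpan hC) fun v =>
    hT _ fun i => Module.Basis.ofSpan_subset hC ⟨v i, rfl⟩

theorem eq_zero_of_nonneg_of_apply_eq_zero_of_mem_interior
    (T : MultilinearMap ℝ (fun _ : ι => E) ℝ) {C : Set E}
    (hpos : ∀ u : ι → E, (∀ i, u i ∈ C) → 0 ≤ T u) {k : E} (hk : k ∈ interior C)
    (h0 : T (fun _ => k) = 0) : T = 0 := by
  have hspan : Submodule.span ℝ C = ⊤ :=
    (Submodule.span ℝ C).eq_top_of_nonempty_interior' ⟨k, interior_mono Submodule.subset_span hk⟩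
  exact T.eq_zero_of_forall_mem_of_span_eq_top hspan.ge fun u hu =>
    T.apply_eq_zero_of_nonneg_of_mem_interior hpos hk h0 hu

end MultilinearMap

section Minkowski

variable {n : ℕ} [NeZero n]

lemma continuous_mink_self : Continuous fun u : Fin n → ℝ => mink n u u := by
  unfold mink; fun_prop

lemma neg_sq_le_mink_self (k : Fin n → ℝ) : -(k 0) ^ 2 ≤ mink n k k := by
  rw [mink, ← Finset.add_sum_erase _ _ (Finset.mem_univ 0), if_pos rfl]
  have hspace : 0 ≤ ∑ i ∈ Finset.univ.erase 0, (if i = 0 then (-1 : ℝ) else 1) * k i * k i :=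
    Finset.sum_nonneg fun i hi => by simp [Finset.ne_of_mem_erase hi, mul_self_nonneg]
  nlinarith

lemma mem_interior_futureCausal {k : Fin n → ℝ} (hk : FutureCausal n k) (hlt : mink n k k < 0) :
    k ∈ interior {u | FutureCausal n u} := by
  have hk0 : 0 < k 0 := hk.2.lt_of_ne fun h => by
    nlinarith [neg_sq_le_mink_self k, h]
  have hopen : IsOpen {u : Fin n → ℝ | mink n u u < 0 ∧ 0 < u 0} :=
    (isOpen_lt continuous_mink_self continuous_const).inter
      (isOpen_lt continuous_const (continuous_apply 0))
  refine interior_mono (s := {u | mink n u u < 0 ∧ 0 < u 0})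
    (fun u hu => show FutureCausal n u from ⟨hu.1.le, hu.2.le⟩) ?_
  rw [hopen.interior_eq]
  exact ⟨hlt, hk0⟩

end Minkowski

/-- If a nonzero tensor with the dominant property vanishes on the diagonal
tuple of a future-pointing causal vector `k`, then `k` is null. -/
theorem stmt_16 (n r : ℕ) [NeZero n]
    (T : MultilinearMap ℝ (fun _ : Fin r => (Fin n → ℝ)) ℝ)
    (hDP : DP n r T) (hT : T ≠ 0)
    (k : Fin n → ℝ) (hk : FutureCausal n k)
    (h0 : T (fun _ => k) = 0) :
    mink n k k = 0 := by
  by_contra hne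
  exact hT (T.eq_zero_of_nonneg_of_apply_eq_zero_of_mem_interior (C := {u | FutureCausal n u}) hDP
    (mem_interior_futureCausal hk (hk.1.lt_of_ne hne)) h0)
end
end
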